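/- arXiv:2009.02140 — 4 statements merged into one kernel-verified Lean document; each statement's English description precedes it below -/
import Mathlib

section
/- Let d ≥ 1, let A ⊆ ℤ^d be finite, and suppose v_1, …, v_{d+1} ∈ A are affinely independent over ℝ and A is contained in the convex hull of {v_1, …, v_{d+1}}. If x ∈ C_A is a minimal element of C_A, i.e. x − ṽ_i ∉ C_A for every i = 1, …, d+1, then the height of x is at most D − 1. -/
open Pointwise

/-- The lift of `v ∈ ℤ^d` to height 1 in `ℤ^(d+1)`. -/
def liftZ {d : ℕ} (v : Fin d → ℤ) : Fin (d + 1) → ℤ := Fin.snoc v 1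

/-- The cone over `A`: all `ℕ`-linear combinations of lifts of elements of `A`. -/
def coneOver {d : ℕ} (A : Set (Fin d → ℤ)) : Set (Fin (d + 1) → ℤ) :=
  (AddSubmonoid.closure (liftZ '' A) : AddSubmonoid (Fin (d + 1) → ℤ))

/-!
The lifts `ṽ_i` span a sublattice `Λ ⊆ ℤ^(d+1)` of index `D`. Write `x` as a sum of `h` lifts of
elements of `A`. If `h ≥ D`, two of the `D + 1` partial sums `s_0, …, s_D` agree modulo `Λ`, so a
nonempty block `y` of consecutive summands lies in `Λ ∩ C_A`. Write `y = ∑ w_i ṽ_i` with `w_i ∈ ℤ`.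
Since `A ⊆ Δ_A`, every point of `C_A` has nonnegative barycentric coordinates with respect to the
`ṽ_i`, and these are unique, so `w ≥ 0`; as `∑ w_i` is the height of `y`, some `w_i` is positive.
Then `y - ṽ_i ∈ C_A`, hence `x - ṽ_i ∈ C_A`, contradicting minimality.
-/

theorem Submodule.index_span_range_eq_natAbs_det {ι : Type*} [Fintype ι] [DecidableEq ι]
    (b : ι → ι → ℤ) (hb : LinearIndependent ℤ b) :
    (span ℤ (Set.range b)).toAddSubgroup.index = (Matrix.of fun r c => b c r).det.natAbs := by
  refine (natAbs_det_basis_change (Pi.basisFun ℤ ι) _ (Module.Basis.span hb)).symm.trans ?_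
  rw [Module.Basis.det_apply]
  congr 2
  ext r c
  simp [Module.Basis.toMatrix_apply]

theorem Matrix.det_ne_zero_of_linearIndependent_cols {ι R : Type*} [Fintype ι] [DecidableEq ι]
    [CommRing R] [IsDomain R] {M : Matrix ι ι R} (hM : LinearIndependent R M.col) :
    M.det ≠ 0 := by
  intro h
  obtain ⟨w, hw₀, hw⟩ := exists_mulVec_eq_zero_iff.2 h
  refine hw₀ (funext (Fintype.linearIndependent_iff.1 hM w ?_))
  ext r
  simpa [mulVec, dotProduct, Finset.sum_apply, mul_comm] using congrFun hw r

theorem AddSubgroup.exists_append_sum_mem_of_index_le_length {G : Type*} [AddGroup G]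
    (H : AddSubgroup G) [H.FiniteIndex] (l : List G) (hl : H.index ≤ l.length) :
    ∃ l₁ l₂ l₃, l = l₁ ++ l₂ ++ l₃ ∧ l₂ ≠ [] ∧ l₂.sum ∈ H := by
  suffices key : ∀ j k : ℕ, j < k → k ≤ l.length → ((l.take j).sum : G ⧸ H) = (l.take k).sum →
      ∃ l₁ l₂ l₃, l = l₁ ++ l₂ ++ l₃ ∧ l₂ ≠ [] ∧ l₂.sum ∈ H by
    have hcard : Nat.card (G ⧸ H) < Nat.card (Fin (H.index + 1)) := by
      simp [AddSubgroup.index]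
    obtain ⟨j, k, hsum, hjk⟩ := Function.not_injective_iff.1 fun hinj =>
      (Nat.card_le_card_of_injective
        (fun k : Fin (H.index + 1) => ((l.take k).sum : G ⧸ H)) hinj).not_gt hcard
    rcases Fin.lt_or_lt_of_ne hjk with h | h
    · exact key j k h (by have := k.is_lt; omega) hsum
    · exact key k j h (by have := j.is_lt; omega) hsum.symm
  intro j k hjk hk hsum
  refine ⟨l.take j, (l.drop j).take (k - j), (l.drop j).drop (k - j), by simp, ?_, ?_⟩
  · simp only [ne_eq, List.take_eq_nil_iff, List.drop_eq_nil_iff, not_or]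
    omega
  · have htake : l.take k = l.take j ++ (l.drop j).take (k - j) := by
      rw [← List.take_add, Nat.add_sub_cancel' hjk.le]
    rw [htake, List.sum_append, QuotientAddGroup.eq] at hsum
    simpa using hsum

theorem sum_smul_snoc_one {R ι : Type*} [Ring R] [Fintype ι] {d : ℕ} (t : ι → R)
    (p : ι → Fin d → R) :
    ∑ i, t i • (Fin.snoc (p i) 1 : Fin (d + 1) → R) = Fin.snoc (∑ i, t i • p i) (∑ i, t i) := by
  ext r
  induction r using Fin.lastCases <;> simp [Finset.sum_apply]

theorem AffineIndependent.linearIndependent_snoc_one {R ι : Type*} [Ring R] [Fintype ι] {d : ℕ}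
    {p : ι → Fin d → R} (hp : AffineIndependent R p) :
    LinearIndependent R (fun i => (Fin.snoc (p i) 1 : Fin (d + 1) → R)) := by
  refine Fintype.linearIndependent_iff.2 fun g hg i => ?_
  rw [sum_smul_snoc_one] at hg
  exact hp.eq_zero_of_sum_eq_zero (by simpa using congrFun hg (Fin.last d))
    (funext fun j => by simpa using congrFun hg j.castSucc) i (Finset.mem_univ i)

theorem exists_nonneg_sum_smul_eq_of_mem_convexHull_range {R E ι : Type*} [Field R]
    [LinearOrder R] [IsStrictOrderedRing R] [AddCommGroup E] [Module R E] [Fintype ι]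
    {p : ι → E} {x : E} (hx : x ∈ convexHull R (Set.range p)) :
    ∃ t : ι → R, (∀ i, 0 ≤ t i) ∧ ∑ i, t i = 1 ∧ ∑ i, t i • p i = x := by
  classical
  obtain ⟨s, w, hw₀, hw₁, rfl⟩ := (convexHull_range_eq_exists_affineCombination p).subset hx
  refine ⟨fun i => if i ∈ s then w i else 0, fun i => ?_, ?_, ?_⟩
  · dsimp only
    split_ifs with hi
    exacts [hw₀ i hi, le_rfl]
  · simpa [Finset.sum_ite_mem] using hw₁
  · simp [s.affineCombination_eq_linear_combination _ _ hw₁, ite_smul, Finset.sum_ite_mem]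

section Cone

variable {d : ℕ} {A : Set (Fin d → ℤ)} {v : Fin (d + 1) → Fin d → ℤ}

theorem liftZ_last (a : Fin d → ℤ) : liftZ a (Fin.last d) = 1 := Fin.snoc_last _ _

theorem intCast_liftZ (a : Fin d → ℤ) :
    (fun r => (liftZ a r : ℝ)) = Fin.snoc (fun j => (a j : ℝ)) 1 := by
  ext r
  induction r using Fin.lastCases <;> simp [liftZ]

theorem list_sum_last_eq_length {l : List (Fin (d + 1) → ℤ)} (hl : ∀ y ∈ l, y ∈ liftZ '' A) :
    l.sum (Fin.last d) = l.length := by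
  induction l with
  | nil => simp
  | cons y l ih =>
    obtain ⟨a, -, rfl⟩ := hl y List.mem_cons_self
    simp [liftZ_last, ih fun z hz => hl z (List.mem_cons_of_mem _ hz), add_comm]

theorem linearIndependent_liftZ (haff : AffineIndependent ℝ (fun i (j : Fin d) => (v i j : ℝ))) :
    LinearIndependent ℤ (fun i => liftZ (v i)) := by
  have hcast : (fun i => algebraMap ℤ ℝ ∘ liftZ (v i)) =
      fun i => (Fin.snoc (fun j => (v i j : ℝ)) 1 : Fin (d + 1) → ℝ) :=
    funext fun i => intCast_liftZ (v i)
  rw [← linearIndependent_algebraMap_comp_iff (S := ℝ), hcast]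
  exact haff.linearIndependent_snoc_one

theorem sum_smul_liftZ_mem_coneOver (hvA : ∀ i, v i ∈ A) {w : Fin (d + 1) → ℤ} (hw : 0 ≤ w) :
    ∑ i, w i • liftZ (v i) ∈ coneOver A := by
  refine AddSubmonoid.sum_mem _ fun i _ => ?_
  rw [← Int.toNat_of_nonneg (hw i), natCast_zsmul]
  exact AddSubmonoid.nsmul_mem _ (AddSubmonoid.subset_closure (Set.mem_image_of_mem _ (hvA i))) _

theorem exists_nonneg_sum_smul_eq_of_mem_coneOver
    (hhull : ∀ a ∈ A, (fun j => (a j : ℝ)) ∈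
      convexHull ℝ (Set.range (fun i (j : Fin d) => (v i j : ℝ))))
    {y : Fin (d + 1) → ℤ} (hy : y ∈ coneOver A) :
    ∃ t : Fin (d + 1) → ℝ, 0 ≤ t ∧
      ∑ i, t i • (Fin.snoc (fun j => (v i j : ℝ)) 1 : Fin (d + 1) → ℝ) = fun r => (y r : ℝ) := by
  induction hy using AddSubmonoid.closure_induction with
  | mem y hy =>
    obtain ⟨a, ha, rfl⟩ := hy
    obtain ⟨t, ht₀, ht₁, hta⟩ := exists_nonneg_sum_smul_eq_of_mem_convexHull_range (hhull a ha)
    exact ⟨t, ht₀, by rw [sum_smul_snoc_one, hta, ht₁, intCast_liftZ]⟩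
  | zero => exact ⟨0, le_rfl, by ext; simp⟩
  | add y z _ _ hy hz =>
    obtain ⟨s, hs₀, hs⟩ := hy
    obtain ⟨t, ht₀, ht⟩ := hz
    refine ⟨s + t, add_nonneg hs₀ ht₀, ?_⟩
    simp only [Pi.add_apply, add_smul, Finset.sum_add_distrib, hs, ht]
    ext; simp

theorem nonneg_of_sum_smul_liftZ_mem_coneOver
    (haff : AffineIndependent ℝ (fun i (j : Fin d) => (v i j : ℝ)))
    (hhull : ∀ a ∈ A, (fun j => (a j : ℝ)) ∈
      convexHull ℝ (Set.range (fun i (j : Fin d) => (v i j : ℝ))))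
    {w : Fin (d + 1) → ℤ} (hw : ∑ i, w i • liftZ (v i) ∈ coneOver A) : 0 ≤ w := by
  obtain ⟨t, ht₀, ht⟩ := exists_nonneg_sum_smul_eq_of_mem_coneOver hhull hw
  have hwt : ∑ i, t i • (Fin.snoc (fun j => (v i j : ℝ)) 1 : Fin (d + 1) → ℝ) =
      ∑ i, (w i : ℝ) • Fin.snoc (fun j => (v i j : ℝ)) 1 := by
    rw [ht]
    ext r
    simp [← intCast_liftZ, Finset.sum_apply]
  intro i
  have hti : (0 : ℝ) ≤ t i := ht₀ i
  rw [Fintype.linearIndependent_iffₛ.1 haff.linearIndependent_snoc_one _ _ hwt i] at hti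
  exact_mod_cast hti

theorem exists_sub_liftZ_mem_coneOver (hvA : ∀ i, v i ∈ A)
    (haff : AffineIndependent ℝ (fun i (j : Fin d) => (v i j : ℝ)))
    (hhull : ∀ a ∈ A, (fun j => (a j : ℝ)) ∈
      convexHull ℝ (Set.range (fun i (j : Fin d) => (v i j : ℝ))))
    {y : Fin (d + 1) → ℤ} (hy : y ∈ coneOver A)
    (hyΛ : y ∈ Submodule.span ℤ (Set.range fun i => liftZ (v i))) (hy₀ : 0 < y (Fin.last d)) :
    ∃ i, y - liftZ (v i) ∈ coneOver A := by
  obtain ⟨w, rfl⟩ := (Submodule.mem_span_range_iff_exists_fun ℤ).1 hyΛ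
  have hw : 0 ≤ w := nonneg_of_sum_smul_liftZ_mem_coneOver haff hhull hy
  obtain ⟨i, -, hi⟩ : ∃ i ∈ Finset.univ, (0 : ℤ) < w i := by
    refine Finset.exists_lt_of_sum_lt ?_
    simpa [Finset.sum_apply, liftZ_last] using hy₀
  refine ⟨i, ?_⟩
  have hsub : ∑ j, w j • liftZ (v j) - liftZ (v i) =
      ∑ j, (w - Pi.single i 1 : Fin (d + 1) → ℤ) j • liftZ (v j) := by
    simp [sub_smul, Finset.sum_sub_distrib, Pi.single_apply, ite_smul]
  rw [hsub]
  refine sum_smul_liftZ_mem_coneOver hvA fun j => ?_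
  rcases eq_or_ne j i with rfl | hj
  · simp only [Pi.sub_apply, Pi.single_eq_same, Pi.zero_apply, sub_nonneg]
    omega
  · simpa [hj] using hw j

end Cone

theorem minimal_element_height_bound_general (d : ℕ) (A : Set (Fin d → ℤ))
    (v : Fin (d + 1) → Fin d → ℤ) (hvA : ∀ i, v i ∈ A)
    (haff : AffineIndependent ℝ (fun i (j : Fin d) => (v i j : ℝ)))
    (hhull : ∀ a ∈ A, (fun j => (a j : ℝ)) ∈
      convexHull ℝ (Set.range (fun i (j : Fin d) => (v i j : ℝ))))
    (D : ℕ) (hD : (D : ℤ) = |(Matrix.of fun r c => liftZ (v c) r).det|)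
    (x : Fin (d + 1) → ℤ) (hx : x ∈ coneOver A)
    (hmin : ∀ i : Fin (d + 1), x - liftZ (v i) ∉ coneOver A) :
    x (Fin.last d) ≤ (D : ℤ) - 1 := by
  obtain ⟨l, hlA, rfl⟩ := AddSubmonoid.exists_list_of_mem_closure hx
  set Λ := (Submodule.span ℤ (Set.range fun i => liftZ (v i))).toAddSubgroup
  have hli := linearIndependent_liftZ haff
  have hD₀ : 0 < D := by
    have := abs_pos.2
      (Matrix.det_ne_zero_of_linearIndependent_cols (M := .of fun r c => liftZ (v c) r) hli)
    omega
  have hΛ : Λ.index = D := by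
    rw [Submodule.index_span_range_eq_natAbs_det _ hli]
    exact_mod_cast (Int.natCast_natAbs _).trans hD.symm
  have : Λ.FiniteIndex := ⟨by omega⟩
  rw [list_sum_last_eq_length hlA]
  by_contra! hlen
  obtain ⟨l₁, l₂, l₃, rfl, hl₂, hl₂Λ⟩ := Λ.exists_append_sum_mem_of_index_le_length l (by omega)
  have hmem : ∀ l' ⊆ l₁ ++ l₂ ++ l₃, l'.sum ∈ coneOver A := fun l' hl' =>
    AddSubmonoid.list_sum_mem _ fun y hy => AddSubmonoid.subset_closure (hlA y (hl' hy))
  have hl₂_height : 0 < l₂.sum (Fin.last d) := by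
    rw [list_sum_last_eq_length fun y hy => hlA y (by simp [hy])]
    simpa [List.length_pos_iff] using hl₂
  obtain ⟨i, hi⟩ := exists_sub_liftZ_mem_coneOver hvA haff hhull (hmem l₂ (by simp)) hl₂Λ hl₂_height
  refine hmin i ?_
  have hsplit : (l₁ ++ l₂ ++ l₃).sum - liftZ (v i) = l₁.sum + l₃.sum + (l₂.sum - liftZ (v i)) := by
    simp only [List.sum_append]
    abel
  rw [hsplit]
  exact add_mem (add_mem (hmem l₁ (by simp)) (hmem l₃ (by simp))) hi

theorem minimal_element_height_bound (d : ℕ) (hd : 1 ≤ d) (A : Set (Fin d → ℤ))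
    (hfin : A.Finite)
    (v : Fin (d + 1) → Fin d → ℤ) (hvA : ∀ i, v i ∈ A)
    (haff : AffineIndependent ℝ (fun i (j : Fin d) => (v i j : ℝ)))
    (hhull : ∀ a ∈ A, (fun j => (a j : ℝ)) ∈
      convexHull ℝ (Set.range (fun i (j : Fin d) => (v i j : ℝ))))
    (D : ℕ) (hD : (D : ℤ) = |(Matrix.of fun r c => liftZ (v c) r).det|)
    (x : Fin (d + 1) → ℤ) (hx : x ∈ coneOver A)
    (hmin : ∀ i : Fin (d + 1), x - liftZ (v i) ∉ coneOver A) :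
    x (Fin.last d) ≤ (D : ℤ) - 1 :=
  minimal_element_height_bound_general d A v hvA haff hhull D hD x hx hmin
end

section
/- Let d ≥ 1, let A ⊆ ℤ^d be finite, and suppose v_1, …, v_{d+1} ∈ A are affinely independent over ℝ and A is contained in the convex hull of {v_1, …, v_{d+1}}. Then for every h ∈ ℕ and every a ∈ ℤ^d: a ∈ hA if and only if there exist g ∈ ℤ^d and H ∈ ℕ such that (g,H) is a minimal element of C_A, together with natural numbers k_1, …, k_{d+1} satisfying H + k_1 + ⋯ + k_{d+1} = h and a = g + k_1 v_1 + ⋯ + k_{d+1} v_{d+1}. -/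
open Pointwise

/-- The `h`-fold sumset `hA` of a set `A` in an additive commutative monoid:
`0A = {0}` and `(n+1)A = A + nA`. -/
def iterSumset {G : Type*} [AddCommMonoid G] (A : Set G) : ℕ → Set G
  | 0 => {0}
  | n + 1 => A + iterSumset A n

lemma iterSumset_add {G : Type*} [AddCommMonoid G] {A : Set G} :
    ∀ {m : ℕ} {n : ℕ} {a b : G}, a ∈ iterSumset A m → b ∈ iterSumset A n →
      a + b ∈ iterSumset A (m + n) := by
  intro m
  induction m with
  | zero =>
    intro n a b ha hb
    simp only [iterSumset, Set.mem_singleton_iff] at ha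
    subst ha
    simpa using hb
  | succ m ih =>
    intro n a b ha hb
    rw [show m + 1 + n = (m + n) + 1 by omega]
    rw [iterSumset] at ha ⊢
    obtain ⟨x, hx, y, hy, rfl⟩ := ha
    exact ⟨x, hx, y + b, ih hy hb, (add_assoc x y b).symm⟩

lemma nsmul_mem_iterSumset {G : Type*} [AddCommMonoid G] {A : Set G} {a : G}
    (ha : a ∈ A) : ∀ n : ℕ, n • a ∈ iterSumset A n := by
  intro n
  induction n with
  | zero => simp [iterSumset]
  | succ n ih =>
    rw [iterSumset]
    exact ⟨a, ha, n • a, ih, by rw [succ_nsmul, add_comm]⟩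

lemma snoc_add {d : ℕ} (g g' : Fin d → ℤ) (c c' : ℤ) :
    (Fin.snoc g c : Fin (d + 1) → ℤ) + Fin.snoc g' c' = Fin.snoc (g + g') (c + c') := by
  funext i
  refine Fin.lastCases ?_ ?_ i <;> simp

lemma snoc_sub {d : ℕ} (g g' : Fin d → ℤ) (c c' : ℤ) :
    (Fin.snoc g c : Fin (d + 1) → ℤ) - Fin.snoc g' c' = Fin.snoc (g - g') (c - c') := by
  funext i
  refine Fin.lastCases ?_ ?_ i <;> simp

lemma snoc_inj {d : ℕ} {g g' : Fin d → ℤ} {c c' : ℤ}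
    (h : (Fin.snoc g c : Fin (d + 1) → ℤ) = Fin.snoc g' c') : g = g' ∧ c = c' := by
  constructor
  · funext i
    have := congrFun h (Fin.castSucc i)
    simpa using this
  · have := congrFun h (Fin.last d)
    simpa using this

lemma mem_coneOver_iff {d : ℕ} {A : Set (Fin d → ℤ)} {x : Fin (d + 1) → ℤ} :
    x ∈ coneOver A ↔ ∃ H : ℕ, ∃ g, g ∈ iterSumset A H ∧ x = Fin.snoc g (H : ℤ) := by
  constructor
  · intro hx
    induction hx using AddSubmonoid.closure_induction with
    | mem y hy =>
      obtain ⟨a, haA, rfl⟩ := hy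
      exact ⟨1, a, ⟨a, haA, 0, rfl, add_zero a⟩, rfl⟩
    | zero => exact ⟨0, 0, rfl, by funext i; refine Fin.lastCases ?_ ?_ i <;> simp⟩
    | add y z hy hz ihy ihz =>
      obtain ⟨H, g, hg, rfl⟩ := ihy
      obtain ⟨H', g', hg', rfl⟩ := ihz
      exact ⟨H + H', g + g', iterSumset_add hg hg', by rw [snoc_add]; push_cast; rfl⟩
  · rintro ⟨H, g, hg, rfl⟩
    induction H generalizing g with
    | zero =>
      simp only [iterSumset, Set.mem_singleton_iff] at hg
      subst hg
      have : (Fin.snoc 0 ((0 : ℕ) : ℤ) : Fin (d + 1) → ℤ) = 0 := by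
        funext i; refine Fin.lastCases ?_ ?_ i <;> simp
      rw [this]
      exact AddSubmonoid.zero_mem _
    | succ H ih =>
      rw [iterSumset] at hg
      obtain ⟨a, haA, y, hy, rfl⟩ := hg
      have : (Fin.snoc (a + y) ((H + 1 : ℕ) : ℤ) : Fin (d + 1) → ℤ)
          = liftZ a + Fin.snoc y (H : ℤ) := by
        rw [liftZ, snoc_add]; push_cast; rw [add_comm (1 : ℤ)]
      rw [this]
      exact AddSubmonoid.add_mem _ (AddSubmonoid.subset_closure ⟨a, haA, rfl⟩) (ih y hy)

lemma snoc_mem_coneOver_iff {d : ℕ} {A : Set (Fin d → ℤ)} {g : Fin d → ℤ} {H : ℕ} :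
    (Fin.snoc g (H : ℤ) : Fin (d + 1) → ℤ) ∈ coneOver A ↔ g ∈ iterSumset A H := by
  rw [mem_coneOver_iff]
  constructor
  · rintro ⟨H', g', hg', heq⟩
    obtain ⟨h1, h2⟩ := snoc_inj heq
    obtain rfl : H = H' := by exact_mod_cast h2
    rwa [h1]
  · intro hg
    exact ⟨H, g, hg, rfl⟩

theorem sumset_from_minimal_elements (d : ℕ) (hd : 1 ≤ d) (A : Set (Fin d → ℤ))
    (hfin : A.Finite)
    (v : Fin (d + 1) → Fin d → ℤ) (hvA : ∀ i, v i ∈ A)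
    (haff : AffineIndependent ℝ (fun i (j : Fin d) => (v i j : ℝ)))
    (hhull : ∀ a ∈ A, (fun j => (a j : ℝ)) ∈
      convexHull ℝ (Set.range (fun i (j : Fin d) => (v i j : ℝ)))) :
    ∀ (h : ℕ) (a : Fin d → ℤ),
      a ∈ iterSumset A h ↔
        ∃ (g : Fin d → ℤ) (H : ℕ) (k : Fin (d + 1) → ℕ),
          (Fin.snoc g (H : ℤ) ∈ coneOver A ∧
            ∀ i : Fin (d + 1), Fin.snoc g (H : ℤ) - liftZ (v i) ∉ coneOver A) ∧
          H + ∑ i, k i = h ∧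
          a = g + ∑ i, (k i) • v i := by
  intro h
  induction h with
  | zero =>
    intro a
    constructor
    · intro ha
      simp only [iterSumset, Set.mem_singleton_iff] at ha
      subst ha
      refine ⟨0, 0, 0, ⟨?_, ?_⟩, by simp, by simp⟩
      · exact snoc_mem_coneOver_iff.mpr (by simp [iterSumset])
      · intro i hmem
        rw [liftZ, snoc_sub, mem_coneOver_iff] at hmem
        obtain ⟨H', g', _, heq⟩ := hmem
        have := (snoc_inj heq).2
        omega
    · rintro ⟨g, H, k, ⟨hg, _⟩, hsum, rfl⟩
      obtain ⟨rfl, hk⟩ : H = 0 ∧ ∀ i, k i = 0 := by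
        constructor
        · omega
        · intro i
          have h1 : k i ≤ ∑ j, k j := Finset.single_le_sum (fun j _ => Nat.zero_le _)
            (Finset.mem_univ i)
          omega
      have : ∑ i, k i • v i = 0 := by
        apply Finset.sum_eq_zero; intro i _; rw [hk i, zero_smul]
      rw [this, add_zero]
      exact snoc_mem_coneOver_iff.mp hg
  | succ n ih =>
    intro a
    constructor
    · intro ha
      by_cases hmin : ∀ i : Fin (d + 1),
          (Fin.snoc a ((n + 1 : ℕ) : ℤ) : Fin (d + 1) → ℤ) - liftZ (v i) ∉ coneOver A
      · exact ⟨a, n + 1, 0, ⟨snoc_mem_coneOver_iff.mpr ha, hmin⟩, by simp, by simp⟩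
      · push_neg at hmin
        obtain ⟨i, hi⟩ := hmin
        rw [liftZ, snoc_sub] at hi
        have : ((n + 1 : ℕ) : ℤ) - 1 = (n : ℤ) := by push_cast; ring
        rw [this] at hi
        have hav : a - v i ∈ iterSumset A n := snoc_mem_coneOver_iff.mp hi
        obtain ⟨g, H, k, hmin', hsum, heq⟩ := (ih (a - v i)).mp hav
        refine ⟨g, H, fun j => k j + if j = i then 1 else 0, hmin', ?_, ?_⟩
        · rw [Finset.sum_add_distrib, Finset.sum_ite_eq' Finset.univ i (fun _ => 1)]
          simp only [Finset.mem_univ, if_true]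
          omega
        · have hsplit : ∑ j, (k j + if j = i then 1 else 0) • v j
              = (∑ j, k j • v j) + v i := by
            calc ∑ j, (k j + if j = i then 1 else 0) • v j
                = ∑ j, (k j • v j + if j = i then v j else 0) := by
                  apply Finset.sum_congr rfl
                  intro j _
                  by_cases hj : j = i <;> simp [hj, add_smul]
              _ = (∑ j, k j • v j) + ∑ j, (if j = i then v j else 0) :=
                  Finset.sum_add_distrib
              _ = (∑ j, k j • v j) + v i := by
                  rw [Finset.sum_ite_eq' Finset.univ i v]
                  simp
          rw [hsplit, ← add_assoc, ← heq, sub_add_cancel]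
    · rintro ⟨g, H, k, ⟨hg, _⟩, hsum, rfl⟩
      have hgmem : g ∈ iterSumset A H := snoc_mem_coneOver_iff.mp hg
      have hksum : (∑ i, k i • v i) ∈ iterSumset A (∑ i, k i) := by
        classical
        induction (Finset.univ : Finset (Fin (d + 1))) using Finset.induction with
        | empty => simp [iterSumset]
        | insert _ _ hnot ih2 =>
          rw [Finset.sum_insert hnot, Finset.sum_insert hnot]
          exact iterSumset_add (nsmul_mem_iterSumset (hvA _) _) ih2
      rw [← hsum]
      exact iterSumset_add hgmem hksum
end

section
/- Let d ≥ 1 and let v_0, v_1, …, v_d be distinct nonzero vectors in ℤ^d with v_1, …, v_d linearly independent over ℚ. Let h ∈ ℕ and let I be a nonempty finite set of natural numbers with I ⊆ {0, …, h} such that all elements of I are congruent to one another modulo N. Then ⋂_{j∈I} A_{j,h} = A_{min I, h} ∩ A_{max I, h}. -/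
open Pointwise

/-- The truncated cone `C_k = {n₁v₁ + ⋯ + n_d v_d : nᵢ ∈ ℕ, n₁ + ⋯ + n_d ≤ k}`. -/
def truncCone {d : ℕ} (v : Fin d → Fin d → ℤ) (k : ℕ) : Set (Fin d → ℤ) :=
  {x | ∃ n : Fin d → ℕ, (∑ i, n i) ≤ k ∧ x = ∑ i, (n i) • v i}

/-- The translated truncated cone `A_{j,h} = j·v₀ + C_{h-j}` (empty if `j > h`). -/
def truncA {d : ℕ} (v0 : Fin d → ℤ) (v : Fin d → Fin d → ℤ) (j h : ℕ) :
    Set (Fin d → ℤ) :=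
  if j ≤ h then (fun x => j • v0 + x) '' truncCone v (h - j) else ∅

/-!
Write `x = m•v₀ + ∑ aᵢvᵢ = M•v₀ + ∑ bᵢvᵢ` with `m = min I`, `M = max I` and `N•v₀ = ∑ wᵢvᵢ`.
Since `M - m = N s`, linear independence of the `vᵢ` forces `a - b = s w`. For `j = m + N t` with
`0 ≤ t ≤ s` the coefficients `a - t w` then express `x` as `j•v₀ + ∑ cᵢvᵢ`; both they and the
total `∑ cᵢ + j` are affine in `t`, so they inherit the bounds `cᵢ ≥ 0` and `∑ cᵢ + j ≤ h` from the
endpoints `t = 0` and `t = s`.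
-/

theorem linearIndependent_int_of_ratCast {ι κ : Type*} {v : ι → κ → ℤ}
    (hv : LinearIndependent ℚ (fun i j => (v i j : ℚ))) : LinearIndependent ℤ v :=
  .of_comp ((Algebra.linearMap ℤ ℚ).compLeft κ) (hv.restrict_scalars' ℤ)

theorem sub_mul_le_of_endpoints {α : Type*} [CommRing α] [LinearOrder α] [IsStrictOrderedRing α]
    {p q s t B : α} (ht : 0 ≤ t) (hts : t ≤ s) (h₀ : p ≤ B) (hs : p - s * q ≤ B) :
    p - t * q ≤ B := by
  rcases le_total 0 q with hq | hq
  · linarith [mul_nonneg ht hq]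
  · linarith [mul_le_mul_of_nonpos_right hts hq]

theorem le_sub_mul_of_endpoints {α : Type*} [CommRing α] [LinearOrder α] [IsStrictOrderedRing α]
    {p q s t B : α} (ht : 0 ≤ t) (hts : t ≤ s) (h₀ : B ≤ p) (hs : B ≤ p - s * q) :
    B ≤ p - t * q := by
  have := sub_mul_le_of_endpoints (p := -p) (q := -q) (B := -B) ht hts (by linarith) (by linarith)
  linarith

theorem mem_truncA_iff {d : ℕ} {v0 : Fin d → ℤ} {v : Fin d → Fin d → ℤ} {j h : ℕ}
    {x : Fin d → ℤ} : x ∈ truncA v0 v j h ↔ ∃ c : Fin d → ℤ, (∀ i, 0 ≤ c i) ∧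
      ∑ i, c i + j ≤ h ∧ x = (j : ℤ) • v0 + ∑ i, c i • v i := by
  constructor
  · intro hx
    unfold truncA at hx
    split_ifs at hx with hjh
    · obtain ⟨_, ⟨n, hn, rfl⟩, rfl⟩ := hx
      refine ⟨fun i => n i, fun i => by positivity, ?_, by simp⟩
      zify [hjh] at hn
      linarith
    · simp at hx
  · rintro ⟨c, hc, hsum, rfl⟩
    have hjh : j ≤ h := by have := Finset.sum_nonneg fun i (_ : i ∈ Finset.univ) => hc i; omega
    rw [truncA, if_pos hjh]
    refine ⟨_, ⟨fun i => (c i).toNat, ?_, rfl⟩, ?_⟩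
    · zify [hjh]
      simp only [Int.toNat_of_nonneg (hc _)]
      omega
    · simp only [← natCast_zsmul, Int.toNat_of_nonneg (hc _)]

theorem mem_truncA_of_mem_of_mem {d N m s t h : ℕ} {v0 w : Fin d → ℤ} {v : Fin d → Fin d → ℤ}
    (hv : LinearIndependent ℤ v) (hw : (N : ℤ) • v0 = ∑ i, w i • v i) (hts : t ≤ s)
    {x : Fin d → ℤ} (hm : x ∈ truncA v0 v m h) (hM : x ∈ truncA v0 v (m + N * s) h) :
    x ∈ truncA v0 v (m + N * t) h := by
  obtain ⟨a, ha, hasum, rfl⟩ := mem_truncA_iff.1 hm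
  obtain ⟨b, hb, hbsum, hx⟩ := mem_truncA_iff.1 hM
  have hmul (k : ℤ) : ∑ i, (k * w i) • v i = (k * N) • v0 := by
    simp only [mul_smul, ← Finset.smul_sum, ← hw]
  have hb_eq : ∀ i, a i - s * w i = b i := by
    refine Fintype.linearIndependent_iffₛ.1 hv _ _ ?_
    simp only [sub_smul, Finset.sum_sub_distrib, hmul]
    push_cast at hx
    linear_combination (norm := module) hx
  refine mem_truncA_iff.2 ⟨fun i => a i - t * w i, fun i => ?_, ?_, ?_⟩
  · exact le_sub_mul_of_endpoints t.cast_nonneg (Nat.cast_le.2 hts) (ha i) (hb_eq i ▸ hb i)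
  · have htotal (k : ℤ) : ∑ i, (a i - k * w i) + (m + N * k) =
        (∑ i, a i + m) - k * (∑ i, w i - N) := by
      simp only [Finset.sum_sub_distrib, ← Finset.mul_sum]; ring
    push_cast
    rw [htotal]
    refine sub_mul_le_of_endpoints t.cast_nonneg (Nat.cast_le.2 hts) hasum ?_
    rw [← htotal]
    simp only [hb_eq]
    exact_mod_cast hbsum
  · simp only [sub_smul, Finset.sum_sub_distrib, hmul]
    push_cast
    module

theorem multiple_intersection_of_truncated_cones_general (d : ℕ)
    (v0 : Fin d → ℤ) (v : Fin d → Fin d → ℤ)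
    (hli : LinearIndependent ℚ (fun i (j : Fin d) => (v i j : ℚ)))
    (N : ℕ)
    (hN : IsLeast {n : ℕ | 0 < n ∧ (n • v0) ∈ Submodule.span ℤ (Set.range v)} N)
    (h : ℕ) (I : Finset ℕ) (hne : I.Nonempty)
    (hcong : ∀ j ∈ I, ∀ j' ∈ I, j ≡ j' [MOD N]) :
    (⋂ j ∈ I, truncA v0 v j h) =
      truncA v0 v (I.min' hne) h ∩ truncA v0 v (I.max' hne) h := by
  obtain ⟨w, hw⟩ := (Submodule.mem_span_range_iff_exists_fun ℤ).1 hN.1.2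
  rw [← natCast_zsmul] at hw
  refine subset_antisymm (fun x hx => ?_) fun x ⟨hxm, hxM⟩ => Set.mem_iInter₂.2 fun j hj => ?_
  · rw [Set.mem_iInter₂] at hx
    exact ⟨hx _ (I.min'_mem hne), hx _ (I.max'_mem hne)⟩
  have hmj := I.min'_le j hj
  have hjM := I.le_max' j hj
  obtain ⟨t, ht⟩ := (Nat.modEq_iff_dvd' hmj).1 (hcong _ (I.min'_mem hne) j hj)
  obtain ⟨u, hu⟩ := (Nat.modEq_iff_dvd' hjM).1 (hcong j hj _ (I.max'_mem hne))
  have hj : j = I.min' hne + N * t := by omega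
  have hM : I.max' hne = I.min' hne + N * (t + u) := by rw [mul_add]; omega
  rw [hM] at hxM
  rw [hj]
  exact mem_truncA_of_mem_of_mem (linearIndependent_int_of_ratCast hli) hw.symm
    (Nat.le_add_right t u) hxm hxM

theorem multiple_intersection_of_truncated_cones (d : ℕ) (hd : 1 ≤ d)
    (v0 : Fin d → ℤ) (v : Fin d → Fin d → ℤ)
    (hdist : Function.Injective (Fin.cons v0 v : Fin (d + 1) → Fin d → ℤ))
    (hnz : ∀ i : Fin (d + 1), (Fin.cons v0 v : Fin (d + 1) → Fin d → ℤ) i ≠ 0)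
    (hli : LinearIndependent ℚ (fun i (j : Fin d) => (v i j : ℚ)))
    (N : ℕ)
    (hN : IsLeast {n : ℕ | 0 < n ∧ (n • v0) ∈ Submodule.span ℤ (Set.range v)} N)
    (h : ℕ) (I : Finset ℕ) (hne : I.Nonempty) (hIh : ∀ j ∈ I, j ≤ h)
    (hcong : ∀ j ∈ I, ∀ j' ∈ I, j ≡ j' [MOD N]) :
    (⋂ j ∈ I, truncA v0 v j h) =
      truncA v0 v (I.min' hne) h ∩ truncA v0 v (I.max' hne) h :=
  multiple_intersection_of_truncated_cones_general d v0 v hli N hN h I hne hcong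
end

section
/- Let d ≥ 1 and let v_0, v_1, …, v_d be distinct nonzero vectors in ℤ^d with v_1, …, v_d linearly independent over ℚ. Let Γ := {n_1 v_1 + ⋯ + n_d v_d : n_1, …, n_d ∈ ℕ} and suppose w ∈ ℤ^d satisfies Γ ∩ (N·v_0 + Γ) = w + Γ. Then for all a, j, h ∈ ℕ: if h − j − a·H ≥ 0 (as integers) then A_{j,h} ∩ A_{j+aN, h} = j·v_0 + a·w + C_{h−j−aH}, and if h − j − a·H < 0 then A_{j,h} ∩ A_{j+aN, h} = ∅. -/
open Pointwise

/-- The full cone `Γ = {n₁v₁ + ⋯ + n_d v_d : nᵢ ∈ ℕ}`. -/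
def fullCone {d : ℕ} (v : Fin d → Fin d → ℤ) : Set (Fin d → ℤ) :=
  {x | ∃ n : Fin d → ℕ, x = ∑ i, (n i) • v i}

/-!
Write `N • v₀ = ∑ pᵢ vᵢ - ∑ qᵢ vᵢ` with `p, q ∈ ℕ^d` of disjoint supports. By linear
independence, `j v₀ + ∑ nᵢ vᵢ = (j + aN) v₀ + ∑ n'ᵢ vᵢ` forces `n = a p + t` and `n' = a q + t`
for some `t ∈ ℕ^d`, so `A_{j,h} ∩ A_{j+aN,h} = j v₀ + a ∑ pᵢ vᵢ + C_{h-j-aM}` with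
`M = max (∑ pᵢ) (N + ∑ qᵢ)`, and it is empty when `h < j + aM`. The same computation for the
untruncated cone `Γ` (with `a = 1`) gives `w = ∑ pᵢ vᵢ`. Finally, `A_{j,l}` and `A_{j',l}` can
only meet when `j' - j` is a positive multiple of `N`, which makes `M` the collision level `H`.
-/

lemma linearIndependent_nat_of_linearIndependent_intCast {ι κ : Type*} {v : ι → κ → ℤ}
    (hv : LinearIndependent ℚ (fun i j => (v i j : ℚ))) : LinearIndependent ℕ v :=
  (hv.restrict_scalars' ℕ).of_comp ((Int.castAddHom ℚ).compLeft κ).toNatLinearMap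

lemma dvd_of_isLeast_nsmul_mem {R M : Type*} [Ring R] [AddCommGroup M] [Module R M]
    {S : Submodule R M} {x : M} {N k : ℕ} (hN : IsLeast {n : ℕ | 0 < n ∧ n • x ∈ S} N)
    (hk : k • x ∈ S) : N ∣ k := by
  have hord : addOrderOf (Submodule.Quotient.mk x : M ⧸ S) = N := by
    rw [addOrderOf_eq_iff hN.1.1]
    refine ⟨?_, fun m hmN hm => ?_⟩
    · rw [← Submodule.Quotient.mk_smul, Submodule.Quotient.mk_eq_zero]
      exact hN.1.2
    · rw [← Submodule.Quotient.mk_smul, Ne, Submodule.Quotient.mk_eq_zero]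
      exact fun hmem => (hN.2 ⟨hm, hmem⟩).not_gt hmN
  rw [← hord]
  apply addOrderOf_dvd_of_nsmul_eq_zero
  rw [← Submodule.Quotient.mk_smul, Submodule.Quotient.mk_eq_zero]
  exact hk

section LinearCombination

variable {ι M : Type*} [Fintype ι] [AddCommGroup M] {v : ι → M}

lemma exists_add_sum_nsmul_eq_sum_nsmul_of_mem_span {z : M}
    (hz : z ∈ Submodule.span ℤ (Set.range v)) :
    ∃ p q : ι → ℕ, (∀ i, p i = 0 ∨ q i = 0) ∧ z + ∑ i, q i • v i = ∑ i, p i • v i := by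
  obtain ⟨m, rfl⟩ := (Submodule.mem_span_range_iff_exists_fun ℤ).mp hz
  refine ⟨fun i => (m i).toNat, fun i => (-m i).toNat, fun i => by dsimp only; omega, ?_⟩
  rw [← eq_sub_iff_add_eq, ← Finset.sum_sub_distrib]
  refine Finset.sum_congr rfl fun i _ => ?_
  rw [← natCast_zsmul, ← natCast_zsmul, ← sub_smul, Int.toNat_sub_toNat_neg]

lemma sum_nsmul_mem_span (n : ι → ℕ) : ∑ i, n i • v i ∈ Submodule.span ℤ (Set.range v) :=
  Submodule.sum_mem _ fun i _ =>
    Submodule.smul_of_tower_mem _ (n i) (Submodule.subset_span ⟨i, rfl⟩)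

lemma sum_mul_add_nsmul (a : ℕ) (p t : ι → ℕ) :
    ∑ i, (a * p i + t i) • v i = a • ∑ i, p i • v i + ∑ i, t i • v i := by
  simp only [add_smul, mul_smul, Finset.sum_add_distrib, Finset.smul_sum]

lemma sum_nsmul_eq_nsmul_add_sum_nsmul_iff (hv : LinearIndependent ℕ v) {z : M} {p q : ι → ℕ}
    (hpq : ∀ i, p i = 0 ∨ q i = 0) (hz : z + ∑ i, q i • v i = ∑ i, p i • v i) (a : ℕ)
    (n n' : ι → ℕ) :
    ∑ i, n i • v i = a • z + ∑ i, n' i • v i ↔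
      ∃ t : ι → ℕ, ∀ i, n i = a * p i + t i ∧ n' i = a * q i + t i := by
  set L := Fintype.linearCombination ℕ v
  have hL (f : ι → ℕ) : ∑ i, f i • v i = L f := (Fintype.linearCombination_apply ℕ v f).symm
  rw [hL, hL] at hz
  rw [hL, hL, ← add_left_inj (a • L q), add_right_comm, ← smul_add, hz, ← map_nsmul, ← map_nsmul,
    ← map_add, ← map_add, hv.fintypeLinearCombination_injective.eq_iff, funext_iff]
  refine (forall_congr' fun i => ?_).trans
    (Classical.skolem (p := fun i t => n i = a * p i + t ∧ n' i = a * q i + t))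
  have hapq : a * p i = 0 ∨ a * q i = 0 := (hpq i).imp (by simp [·]) (by simp [·])
  simp only [Pi.add_apply, Pi.smul_apply, smul_eq_mul]
  exact ⟨fun _ => ⟨n i - a * p i, by omega, by omega⟩, fun ⟨t, hn, hn'⟩ => by omega⟩

end LinearCombination

section Cones

variable {d : ℕ} {v : Fin d → Fin d → ℤ}

lemma mem_image_add_fullCone {w x : Fin d → ℤ} :
    x ∈ (fun y => w + y) '' fullCone v ↔ ∃ n : Fin d → ℕ, x = w + ∑ i, n i • v i := by
  constructor
  · rintro ⟨_, ⟨n, rfl⟩, rfl⟩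
    exact ⟨n, rfl⟩
  · rintro ⟨n, rfl⟩
    exact ⟨_, ⟨n, rfl⟩, rfl⟩

lemma fullCone_inter_image_add_fullCone (hv : LinearIndependent ℕ v) {z : Fin d → ℤ}
    {p q : Fin d → ℕ} (hpq : ∀ i, p i = 0 ∨ q i = 0) (hz : z + ∑ i, q i • v i = ∑ i, p i • v i) :
    fullCone v ∩ ((fun x => z + x) '' fullCone v) =
      (fun x => ∑ i, p i • v i + x) '' fullCone v := by
  ext x
  rw [Set.mem_inter_iff, mem_image_add_fullCone, mem_image_add_fullCone]
  constructor
  · rintro ⟨⟨n, rfl⟩, n', hx⟩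
    obtain ⟨t, ht⟩ := (sum_nsmul_eq_nsmul_add_sum_nsmul_iff hv hpq hz 1 n n').mp (by
      rwa [one_smul])
    refine ⟨t, ?_⟩
    calc ∑ i, n i • v i = ∑ i, (1 * p i + t i) • v i := by simp only [← (ht _).1]
      _ = ∑ i, p i • v i + ∑ i, t i • v i := by rw [sum_mul_add_nsmul, one_smul]
  · rintro ⟨t, rfl⟩
    refine ⟨⟨fun i => 1 * p i + t i, by rw [sum_mul_add_nsmul, one_smul]⟩,
      fun i => 1 * q i + t i, ?_⟩
    rw [sum_mul_add_nsmul, one_smul, ← add_assoc, hz]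

lemma eq_of_image_add_fullCone_eq (hv : LinearIndependent ℕ v) {w w' : Fin d → ℤ}
    (h : (fun x => w + x) '' fullCone v = (fun x => w' + x) '' fullCone v) : w = w' := by
  have self_mem (u : Fin d → ℤ) : u ∈ (fun x => u + x) '' fullCone v :=
    mem_image_add_fullCone.mpr ⟨0, by simp⟩
  obtain ⟨s, hs⟩ := mem_image_add_fullCone.mp (h ▸ self_mem w)
  obtain ⟨s', hs'⟩ := mem_image_add_fullCone.mp (h.symm ▸ self_mem w')
  have hss' : s + s' = 0 := hv.fintypeLinearCombination_injective <| by
    simp only [map_add, map_zero, Fintype.linearCombination_apply]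
    linear_combination -hs - hs'
  have hs0 : s = 0 := funext fun i => (Nat.add_eq_zero_iff.mp (congrFun hss' i)).1
  simpa [hs0] using hs

end Cones

section TruncatedCones

variable {d : ℕ} {v0 : Fin d → ℤ} {v : Fin d → Fin d → ℤ}

lemma mem_truncA {j h : ℕ} {x : Fin d → ℤ} :
    x ∈ truncA v0 v j h ↔ ∃ n : Fin d → ℕ, j + ∑ i, n i ≤ h ∧ x = j • v0 + ∑ i, n i • v i := by
  unfold truncA truncCone
  split_ifs with hjh
  · constructor
    · rintro ⟨_, ⟨n, hn, rfl⟩, rfl⟩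
      exact ⟨n, by omega, rfl⟩
    · rintro ⟨n, hn, rfl⟩
      exact ⟨_, ⟨n, by omega, rfl⟩, rfl⟩
  · simp only [Set.mem_empty_iff_false, false_iff, not_exists, not_and]
    intro n hn
    omega

lemma nsmul_mem_span_of_mem_truncA {x : Fin d → ℤ} {j j' l : ℕ} (hjj' : j ≤ j')
    (hx : x ∈ truncA v0 v j l) (hx' : x ∈ truncA v0 v j' l) :
    (j' - j) • v0 ∈ Submodule.span ℤ (Set.range v) := by
  obtain ⟨n, -, rfl⟩ := mem_truncA.mp hx
  obtain ⟨n', -, hx'⟩ := mem_truncA.mp hx'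
  rw [← Nat.sub_add_cancel hjj', add_smul] at hx'
  rw [show (j' - j) • v0 = ∑ i, n i • v i - ∑ i, n' i • v i by linear_combination -hx']
  exact sub_mem (sum_nsmul_mem_span n) (sum_nsmul_mem_span n')

variable {N : ℕ} {p q : Fin d → ℕ}

lemma mem_truncA_inter_truncA_iff (hv : LinearIndependent ℕ v) (hpq : ∀ i, p i = 0 ∨ q i = 0)
    (hN : N • v0 + ∑ i, q i • v i = ∑ i, p i • v i) {a j h : ℕ} {x : Fin d → ℤ} :
    x ∈ truncA v0 v j h ∩ truncA v0 v (j + a * N) h ↔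
      ∃ t : Fin d → ℕ, j + a * max (∑ i, p i) (N + ∑ i, q i) + ∑ i, t i ≤ h ∧
        x = j • v0 + a • ∑ i, p i • v i + ∑ i, t i • v i := by
  have hshift (y : Fin d → ℤ) : (j + a * N) • v0 + y = j • v0 + (a • N • v0 + y) := by
    rw [add_smul, mul_smul, add_assoc]
  have hbound (t : Fin d → ℕ) : j + a * max (∑ i, p i) (N + ∑ i, q i) + ∑ i, t i ≤ h ↔
      j + ∑ i, (a * p i + t i) ≤ h ∧ j + a * N + ∑ i, (a * q i + t i) ≤ h := by
    rw [Finset.sum_add_distrib, Finset.sum_add_distrib, ← Finset.mul_sum, ← Finset.mul_sum,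
      ← Nat.mul_max_mul_left, Nat.mul_add]
    omega
  simp only [Set.mem_inter_iff, mem_truncA]
  constructor
  · rintro ⟨⟨n, hn, rfl⟩, n', hn', hx⟩
    rw [hshift, add_right_inj] at hx
    obtain ⟨t, ht⟩ := (sum_nsmul_eq_nsmul_add_sum_nsmul_iff hv hpq hN a n n').mp hx
    obtain rfl : n = fun i => a * p i + t i := funext fun i => (ht i).1
    obtain rfl : n' = fun i => a * q i + t i := funext fun i => (ht i).2
    exact ⟨t, (hbound t).mpr ⟨hn, hn'⟩, by rw [sum_mul_add_nsmul, add_assoc]⟩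
  · rintro ⟨t, ht, rfl⟩
    obtain ⟨hn, hn'⟩ := (hbound t).mp ht
    refine ⟨⟨_, hn, by rw [sum_mul_add_nsmul, add_assoc]⟩, _, hn', ?_⟩
    rw [hshift, sum_mul_add_nsmul, ← hN, smul_add]
    abel

lemma truncA_inter_truncA_eq_image (hv : LinearIndependent ℕ v) (hpq : ∀ i, p i = 0 ∨ q i = 0)
    (hN : N • v0 + ∑ i, q i • v i = ∑ i, p i • v i) {a j h : ℕ}
    (hjh : j + a * max (∑ i, p i) (N + ∑ i, q i) ≤ h) :
    truncA v0 v j h ∩ truncA v0 v (j + a * N) h =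
      (fun x => j • v0 + a • ∑ i, p i • v i + x) ''
        truncCone v (h - j - a * max (∑ i, p i) (N + ∑ i, q i)) := by
  ext x
  rw [mem_truncA_inter_truncA_iff hv hpq hN]
  constructor
  · rintro ⟨t, ht, rfl⟩
    exact ⟨_, ⟨t, by omega, rfl⟩, rfl⟩
  · rintro ⟨_, ⟨t, ht, rfl⟩, rfl⟩
    exact ⟨t, by omega, rfl⟩

lemma truncA_inter_truncA_eq_empty (hv : LinearIndependent ℕ v) (hpq : ∀ i, p i = 0 ∨ q i = 0)
    (hN : N • v0 + ∑ i, q i • v i = ∑ i, p i • v i) {a j h : ℕ}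
    (hhj : h < j + a * max (∑ i, p i) (N + ∑ i, q i)) :
    truncA v0 v j h ∩ truncA v0 v (j + a * N) h = ∅ :=
  Set.eq_empty_iff_forall_notMem.mpr fun _ hx => by
    obtain ⟨t, ht, -⟩ := (mem_truncA_inter_truncA_iff hv hpq hN).mp hx
    omega

lemma isLeast_truncA_inter_truncA_nonempty (hv : LinearIndependent ℕ v)
    (hNmin : IsLeast {n : ℕ | 0 < n ∧ (n • v0) ∈ Submodule.span ℤ (Set.range v)} N)
    (hpq : ∀ i, p i = 0 ∨ q i = 0) (hN : N • v0 + ∑ i, q i • v i = ∑ i, p i • v i) :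
    IsLeast {l : ℕ | ∃ j j' : ℕ, j < j' ∧ j' ≤ l ∧ (truncA v0 v j l ∩ truncA v0 v j' l).Nonempty}
      (max (∑ i, p i) (N + ∑ i, q i)) := by
  refine ⟨⟨0, N, hNmin.1.1, le_max_of_le_right (Nat.le_add_right N _), ?_⟩, ?_⟩
  · have hw := (mem_truncA_inter_truncA_iff hv hpq hN (a := 1) (j := 0)
      (h := max (∑ i, p i) (N + ∑ i, q i))).mpr ⟨0, by simp, rfl⟩
    rw [zero_add, one_mul] at hw
    exact ⟨_, hw⟩
  · rintro l ⟨j, j', hjj', hj'l, x, hx, hx'⟩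
    obtain ⟨a, ha⟩ := dvd_of_isLeast_nsmul_mem hNmin (nsmul_mem_span_of_mem_truncA hjj'.le hx hx')
    obtain rfl : j' = j + a * N := by rw [mul_comm] at ha; omega
    obtain ⟨t, ht, -⟩ := (mem_truncA_inter_truncA_iff hv hpq hN).mp ⟨hx, hx'⟩
    have ha : 0 < a := Nat.pos_of_ne_zero fun ha0 => by simp [ha0] at hjj'
    exact (Nat.le_mul_of_pos_left _ ha).trans (by omega)

end TruncatedCones

theorem intersection_of_two_truncated_cones_general (d : ℕ)
    (v0 : Fin d → ℤ) (v : Fin d → Fin d → ℤ)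
    (hli : LinearIndependent ℚ (fun i (j : Fin d) => (v i j : ℚ)))
    (N : ℕ)
    (hN : IsLeast {n : ℕ | 0 < n ∧ (n • v0) ∈ Submodule.span ℤ (Set.range v)} N)
    (H : ℕ)
    (hH : IsLeast {l : ℕ | ∃ j j' : ℕ, j < j' ∧ j' ≤ l ∧
      (truncA v0 v j l ∩ truncA v0 v j' l).Nonempty} H)
    (w : Fin d → ℤ)
    (hw : fullCone v ∩ ((fun x => N • v0 + x) '' fullCone v) =
      (fun x => w + x) '' fullCone v) :
    ∀ a j h : ℕ,
      (0 ≤ (h : ℤ) - (j : ℤ) - (a : ℤ) * (H : ℤ) →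
        truncA v0 v j h ∩ truncA v0 v (j + a * N) h =
          (fun x => j • v0 + a • w + x) '' truncCone v (h - j - a * H)) ∧
      ((h : ℤ) - (j : ℤ) - (a : ℤ) * (H : ℤ) < 0 →
        truncA v0 v j h ∩ truncA v0 v (j + a * N) h = ∅) := by
  have hv := linearIndependent_nat_of_linearIndependent_intCast hli
  obtain ⟨p, q, hpq, hpqN⟩ := exists_add_sum_nsmul_eq_sum_nsmul_of_mem_span hN.1.2
  obtain rfl : w = ∑ i, p i • v i := eq_of_image_add_fullCone_eq hv <|
    hw.symm.trans (fullCone_inter_image_add_fullCone hv hpq hpqN)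
  obtain rfl : H = max (∑ i, p i) (N + ∑ i, q i) :=
    hH.unique (isLeast_truncA_inter_truncA_nonempty hv hN hpq hpqN)
  intro a j h
  exact ⟨fun hle => truncA_inter_truncA_eq_image hv hpq hpqN (by omega),
    fun hlt => truncA_inter_truncA_eq_empty hv hpq hpqN (by omega)⟩

theorem intersection_of_two_truncated_cones (d : ℕ) (hd : 1 ≤ d)
    (v0 : Fin d → ℤ) (v : Fin d → Fin d → ℤ)
    (hdist : Function.Injective (Fin.cons v0 v : Fin (d + 1) → Fin d → ℤ))
    (hnz : ∀ i : Fin (d + 1), (Fin.cons v0 v : Fin (d + 1) → Fin d → ℤ) i ≠ 0)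
    (hli : LinearIndependent ℚ (fun i (j : Fin d) => (v i j : ℚ)))
    (N : ℕ)
    (hN : IsLeast {n : ℕ | 0 < n ∧ (n • v0) ∈ Submodule.span ℤ (Set.range v)} N)
    (H : ℕ)
    (hH : IsLeast {l : ℕ | ∃ j j' : ℕ, j < j' ∧ j' ≤ l ∧
      (truncA v0 v j l ∩ truncA v0 v j' l).Nonempty} H)
    (w : Fin d → ℤ)
    (hw : fullCone v ∩ ((fun x => N • v0 + x) '' fullCone v) =
      (fun x => w + x) '' fullCone v) :
    ∀ a j h : ℕ,
      (0 ≤ (h : ℤ) - (j : ℤ) - (a : ℤ) * (H : ℤ) →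
        truncA v0 v j h ∩ truncA v0 v (j + a * N) h =
          (fun x => j • v0 + a • w + x) '' truncCone v (h - j - a * H)) ∧
      ((h : ℤ) - (j : ℤ) - (a : ℤ) * (H : ℤ) < 0 →
        truncA v0 v j h ∩ truncA v0 v (j + a * N) h = ∅) :=
  intersection_of_two_truncated_cones_general d v0 v hli N hN H hH w hw
end
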